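/- Let d ≥ 1, let w be a nonnegative weight on finite nonempty subsets of ℤ^d and let α > 0 satisfy: for every x ∈ ℤ^d, Σ_{Λ ∋ x} e^{2α|Λ|}(e^{w(Λ)} − 1) ≤ α, where the sum ranges over all finite nonempty subsets Λ of ℤ^d containing x (in particular this family is summable). Then for every x ∈ ℤ^d, Σ_{n ≥ 1} Σ e^{α(|Λ₁|+⋯+|Λ_n|)} ∏_{i=1}^{n} (e^{w(Λ_i)} − 1) ≤ α, where the inner sum is over all connected collections {Λ₁,…,Λ_n} of n distinct finite nonempty subsets of ℤ^d whose union contains x. -/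

import Mathlib

open scoped BigOperators Classical ENNReal

abbrev Site (d : ℕ) := Fin d → ℤ

/-- A finite collection `T` of finite subsets of `ℤ^d` is connected if the graph on `T`
with an edge between two members whenever they intersect is connected. -/
def ConnColl {d : ℕ} (T : Finset (Finset (Site d))) : Prop :=
  (SimpleGraph.fromRel fun A B : T => ((A : Finset (Site d)) ∩ (B : Finset (Site d))).Nonempty).Connected

/-!
Write `S_N(x)` for the weighted sum over connected collections of at most `N` polymers
covering `x`; it suffices to show `S_N(x) ≤ α` for every `N`, by induction on `N`.
Removing a polymer `Λ₀ ∋ x` from such a collection leaves one whose connected components all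
meet `Λ₀`. Assigning each component to a point `y ∈ Λ₀` that it covers encodes the remainder
injectively as a family, indexed by `y ∈ Λ₀`, of finite sets of connected collections with at
most `N` polymers covering `y`. Since `∑_{M ⊆ t} ∏_{c ∈ M} u c = ∏_{c ∈ t} (1 + u c)`, the
remainder has total weight at most `∏_{y ∈ Λ₀} exp S_N(y) ≤ e^{α|Λ₀|}`, and so
`S_{N+1}(x) ≤ ∑_{Λ₀ ∋ x} e^{2α|Λ₀|} (e^{w(Λ₀)} - 1) ≤ α`.
-/

open Finset

namespace ENNReal

theorem tsum_pi_prod_le {ι : Type*} [Fintype ι] {κ : ι → Type*}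
    (h : ∀ i, κ i → ℝ≥0∞) :
    ∑' f : (∀ i, κ i), ∏ i, h i (f i) ≤ ∏ i, ∑' b, h i b := by
  classical
  rw [ENNReal.tsum_eq_iSup_sum]
  refine iSup_le fun S => ?_
  calc ∑ f ∈ S, ∏ i, h i (f i)
      ≤ ∑ f ∈ Fintype.piFinset fun i => S.image (· i), ∏ i, h i (f i) :=
        sum_le_sum_of_subset fun f hf => Fintype.mem_piFinset.2 fun i => mem_image_of_mem _ hf
    _ = ∏ i, ∑ b ∈ S.image (· i), h i b := (prod_univ_sum _ _).symm
    _ ≤ ∏ i, ∑' b, h i b := prod_le_prod' fun i _ => ENNReal.sum_le_tsum _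

theorem tsum_finset_prod_le_exp {γ : Type*} (u : γ → ℝ≥0∞) {s : ℝ} (hs : 0 ≤ s)
    (hu : ∑' c, u c ≤ ENNReal.ofReal s) :
    ∑' M : Finset γ, ∏ c ∈ M, u c ≤ ENNReal.ofReal (Real.exp s) := by
  classical
  have hfin : ∀ c, u c ≠ ∞ := fun c =>
    ((ENNReal.le_tsum c).trans hu |>.trans_lt ENNReal.ofReal_lt_top).ne
  rw [ENNReal.tsum_eq_iSup_sum]
  refine iSup_le fun S => ?_
  set t := S.biUnion id
  have hsum : ∑ c ∈ t, (u c).toReal ≤ s := by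
    rw [← ENNReal.toReal_sum fun c _ => hfin c, ← ENNReal.toReal_ofReal hs]
    exact ENNReal.toReal_mono ENNReal.ofReal_ne_top ((ENNReal.sum_le_tsum t).trans hu)
  calc ∑ M ∈ S, ∏ c ∈ M, u c
      ≤ ∑ M ∈ t.powerset, ∏ c ∈ M, u c :=
        sum_le_sum_of_subset fun M hM => mem_powerset.2 (subset_biUnion_of_mem id hM)
    _ = ∏ c ∈ t, (1 + u c) := (prod_one_add t).symm
    _ = ENNReal.ofReal (∏ c ∈ t, (1 + (u c).toReal)) := by
        rw [ENNReal.ofReal_prod_of_nonneg fun c _ => by positivity]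
        refine prod_congr rfl fun c _ => ?_
        rw [ENNReal.ofReal_add zero_le_one ENNReal.toReal_nonneg, ENNReal.ofReal_one,
          ENNReal.ofReal_toReal (hfin c)]
    _ ≤ ENNReal.ofReal (Real.exp s) := ENNReal.ofReal_le_ofReal <|
        (Real.prod_one_add_le_exp_sum t fun c => ENNReal.toReal_nonneg).trans
          (Real.exp_le_exp.2 hsum)

theorem tsum_subtype_le_of_forall_truncation_le {α : Type*} (f : α → ℝ≥0∞) (p : α → Prop)
    (size : α → ℕ) {c : ℝ≥0∞} (h : ∀ N, ∑' a : {a // size a ≤ N ∧ p a}, f a ≤ c) :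
    ∑' a : {a // p a}, f a ≤ c := by
  rw [ENNReal.tsum_eq_iSup_sum]
  refine iSup_le fun S => ?_
  set N := S.sup fun a => size a.1
  calc ∑ a ∈ S, f a = ∑' a : S, f a := (S.tsum_subtype fun a => f a).symm
    _ ≤ ∑' a : {a // size a ≤ N ∧ p a}, f a :=
        ENNReal.tsum_comp_le_tsum_of_injective
          (f := fun a : S => (⟨a.1.1, le_sup (f := fun a => size a.1) a.2, a.1.2⟩ :
            {a // size a ≤ N ∧ p a}))
          (fun a b hab => Subtype.ext <| Subtype.ext <| by injection hab)
          fun a => f a.1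
    _ ≤ c := h N

theorem tsum_tsum_size_eq_succ_le {α : Type*} (f : α → ℝ≥0∞) (p : α → Prop) (size : α → ℕ) :
    ∑' n, ∑' a : {a // size a = n + 1 ∧ p a}, f a ≤ ∑' a : {a // p a}, f a := by
  rw [← ENNReal.tsum_sigma' fun q : Σ n, {a // size a = n + 1 ∧ p a} => f q.2.1]
  refine ENNReal.tsum_comp_le_tsum_of_injective
    (f := fun q : Σ n, {a // size a = n + 1 ∧ p a} => (⟨q.2.1, q.2.2.2⟩ : {a // p a})) ?_
    fun a => f a.1
  rintro ⟨n, a, ha⟩ ⟨m, b, hb⟩ h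
  obtain rfl : a = b := congrArg Subtype.val h
  obtain rfl : n = m := by omega
  rfl

end ENNReal

namespace Polymer

variable {V : Type*}

section Weights

variable (w : Finset V → ℝ) (α : ℝ)

noncomputable def weight (Λ : Finset V) : ℝ≥0∞ :=
  ENNReal.ofReal (Real.exp (α * Λ.card) * (Real.exp (w Λ) - 1))

noncomputable def collectionWeight (T : Finset (Finset V)) : ℝ≥0∞ :=
  ∏ Λ ∈ T, weight w α Λ

theorem collectionWeight_eq_ofReal {T : Finset (Finset V)} (hw : ∀ Λ ∈ T, 0 ≤ w Λ) :
    collectionWeight w α T =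
      ENNReal.ofReal (Real.exp (α * ∑ Λ ∈ T, (Λ.card : ℝ)) * ∏ Λ ∈ T, (Real.exp (w Λ) - 1)) := by
  have hnonneg : ∀ Λ ∈ T, 0 ≤ Real.exp (α * Λ.card) * (Real.exp (w Λ) - 1) := fun Λ hΛ =>
    mul_nonneg (Real.exp_nonneg _) (sub_nonneg.2 (Real.one_le_exp (hw Λ hΛ)))
  rw [mul_sum, Real.exp_sum, ← prod_mul_distrib, ENNReal.ofReal_prod_of_nonneg hnonneg]
  rfl

theorem weight_mul_ofReal_exp (Λ : Finset V) :
    weight w α Λ * ENNReal.ofReal (Real.exp (α * Λ.card)) =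
      ENNReal.ofReal (Real.exp (2 * α * Λ.card) * (Real.exp (w Λ) - 1)) := by
  rw [weight, ← ENNReal.ofReal_mul' (Real.exp_nonneg _), two_mul, add_mul, Real.exp_add]
  ring_nf

end Weights

variable [DecidableEq V]

def intersectionGraph (T : Finset (Finset V)) : SimpleGraph T :=
  SimpleGraph.fromRel fun A B => ((A : Finset V) ∩ B).Nonempty

section Components

variable (T : Finset (Finset V)) {A B Λ Λ₀ : Finset V}

def Touch (A B : Finset V) : Prop :=
  A ∈ T ∧ B ∈ T ∧ (A ∩ B).Nonempty

def Linked : Finset V → Finset V → Prop :=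
  Relation.ReflTransGen (Touch T)

instance : Std.Symm (Touch T) :=
  ⟨fun A B h => ⟨h.2.1, h.1, inter_comm A B ▸ h.2.2⟩⟩

noncomputable def component (A : Finset V) : Finset (Finset V) :=
  T.filter (Linked T A)

noncomputable def components : Finset (Finset (Finset V)) :=
  T.image (component T)

variable {T}

theorem Linked.symm (h : Linked T A B) : Linked T B A :=
  Std.Symm.symm (r := Relation.ReflTransGen (Touch T)) _ _ h

theorem reachable_iff_linked {a b : T} :
    (intersectionGraph T).Reachable a b ↔ Linked T a b := by
  rw [SimpleGraph.reachable_iff_reflTransGen]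
  refine ⟨fun h => Relation.ReflTransGen.lift Subtype.val (fun a b hab => ?_) a b h, fun h => ?_⟩
  · rcases ((SimpleGraph.fromRel_adj _ _ _).1 hab).2 with hab | hba
    · exact ⟨a.2, b.2, hab⟩
    · exact Std.Symm.symm (r := Touch T) _ _ ⟨b.2, a.2, hba⟩
  · obtain ⟨a, ha⟩ := a
    obtain ⟨b, hb⟩ := b
    change Linked T a b at h
    induction h with
    | refl => rfl
    | @tail B C _ hBC ih =>
        refine (ih hBC.1).trans ?_
        by_cases hne : B = C
        · subst hne; rfl
        · exact .single ((SimpleGraph.fromRel_adj _ _ _).2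
            ⟨fun h => hne (congrArg Subtype.val h), .inl hBC.2.2⟩)

theorem connected_intersectionGraph_iff :
    (intersectionGraph T).Connected ↔ T.Nonempty ∧ ∀ A ∈ T, ∀ B ∈ T, Linked T A B := by
  rw [SimpleGraph.connected_iff, SimpleGraph.Preconnected]
  simp only [reachable_iff_linked, Subtype.forall, nonempty_subtype]
  exact and_comm

theorem mem_component : B ∈ component T A ↔ B ∈ T ∧ Linked T A B :=
  mem_filter

theorem component_subset : component T A ⊆ T :=
  filter_subset _ _

theorem self_mem_component (hA : A ∈ T) : A ∈ component T A :=
  mem_component.2 ⟨hA, .refl⟩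

theorem component_eq_of_linked (h : Linked T A B) : component T B = component T A := by
  ext C
  simp only [mem_component]
  exact and_congr_right fun _ => ⟨h.trans, h.symm.trans⟩

theorem Linked.restrict_component (hA : A ∈ component T Λ) (h : Linked T A B) :
    Linked (component T Λ) A B := by
  induction h with
  | refl => exact .refl
  | @tail B C hAB hBC ih =>
      have hΛA := (mem_component.1 hA).2
      have hB : B ∈ component T Λ := mem_component.2 ⟨hBC.1, hΛA.trans hAB⟩
      have hC : C ∈ component T Λ := mem_component.2 ⟨hBC.2.1, (hΛA.trans hAB).tail hBC⟩
      exact ih.tail ⟨hB, hC, hBC.2.2⟩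

theorem connected_component (hA : A ∈ T) : (intersectionGraph (component T A)).Connected := by
  refine connected_intersectionGraph_iff.2 ⟨⟨A, self_mem_component hA⟩, fun B hB C hC => ?_⟩
  exact Linked.restrict_component hB ((mem_component.1 hB).2.symm.trans (mem_component.1 hC).2)

theorem subset_of_mem_components {C : Finset (Finset V)} (hC : C ∈ components T) : C ⊆ T := by
  obtain ⟨A, -, rfl⟩ := mem_image.1 hC
  exact component_subset

theorem connected_of_mem_components {C : Finset (Finset V)} (hC : C ∈ components T) :
    (intersectionGraph C).Connected := by
  obtain ⟨A, hA, rfl⟩ := mem_image.1 hC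
  exact connected_component hA

theorem biUnion_components : (components T).biUnion id = T := by
  ext A
  simp only [components, mem_biUnion, mem_image, id_eq]
  exact ⟨fun ⟨_, ⟨_, _, hC⟩, hA⟩ => component_subset (hC ▸ hA),
    fun hA => ⟨_, ⟨A, hA, rfl⟩, self_mem_component hA⟩⟩

theorem pairwiseDisjoint_components :
    (components T : Set (Finset (Finset V))).PairwiseDisjoint id := by
  simp only [components, coe_image]
  rintro _ ⟨A, -, rfl⟩ _ ⟨B, -, rfl⟩ hne
  refine disjoint_left.2 fun C hCA hCB => hne ?_
  rw [← component_eq_of_linked (mem_component.1 hCA).2,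
    component_eq_of_linked (mem_component.1 hCB).2]

theorem prod_components {M : Type*} [CommMonoid M] (f : Finset V → M) :
    ∏ C ∈ components T, ∏ Λ ∈ C, f Λ = ∏ Λ ∈ T, f Λ := by
  conv_rhs => rw [← biUnion_components (T := T)]
  exact (prod_biUnion pairwiseDisjoint_components).symm

theorem inter_nonempty_of_mem_components_erase (hT : (intersectionGraph T).Connected)
    (hΛ₀ : Λ₀ ∈ T) {C : Finset (Finset V)} (hC : C ∈ components (T.erase Λ₀)) :
    (C.biUnion id ∩ Λ₀).Nonempty := by
  obtain ⟨Λ, hΛ, rfl⟩ := mem_image.1 hC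
  clear hC
  suffices ∃ B ∈ component (T.erase Λ₀) Λ, (B ∩ Λ₀).Nonempty by
    obtain ⟨B, hB, y, hy⟩ := this
    exact ⟨y, mem_inter.2 ⟨mem_biUnion.2 ⟨B, hB, (mem_inter.1 hy).1⟩, (mem_inter.1 hy).2⟩⟩
  have hlink := (connected_intersectionGraph_iff.1 hT).2 _ (mem_of_mem_erase hΛ) _ hΛ₀
  induction hlink using Relation.ReflTransGen.head_induction_on with
  | refl => exact absurd rfl (ne_of_mem_erase hΛ)
  | @head A B hAB _ ih =>
      by_cases hB : B = Λ₀
      · exact ⟨A, self_mem_component hΛ, hB ▸ hAB.2.2⟩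
      · have hB' : B ∈ T.erase Λ₀ := mem_erase.2 ⟨hB, hAB.2.1⟩
        rw [← component_eq_of_linked (.single ⟨hΛ, hB', hAB.2.2⟩)]
        exact ih hB'

end Components

section Clusters

variable (w : Finset V → ℝ) (α : ℝ)

def IsClusterAt (x : V) (T : Finset (Finset V)) : Prop :=
  (∀ Λ ∈ T, Λ.Nonempty) ∧ (intersectionGraph T).Connected ∧ x ∈ T.biUnion id

def IsAnchoredAt (Λ₀ : Finset V) (T : Finset (Finset V)) : Prop :=
  (∀ Λ ∈ T, Λ.Nonempty) ∧ ∀ C ∈ components T, (C.biUnion id ∩ Λ₀).Nonempty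

noncomputable def truncatedClusterSum (N : ℕ) (x : V) : ℝ≥0∞ :=
  ∑' T : {T // T.card ≤ N ∧ IsClusterAt x T}, collectionWeight w α T

theorem isAnchoredAt_erase {T : Finset (Finset V)} {Λ₀ : Finset V} (hne : ∀ Λ ∈ T, Λ.Nonempty)
    (hT : (intersectionGraph T).Connected) (hΛ₀ : Λ₀ ∈ T) : IsAnchoredAt Λ₀ (T.erase Λ₀) :=
  ⟨fun Λ hΛ => hne Λ (mem_of_mem_erase hΛ),
    fun _ hC => inter_nonempty_of_mem_components_erase hT hΛ₀ hC⟩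

theorem truncatedClusterSum_succ_le (N : ℕ) (x : V) :
    truncatedClusterSum w α (N + 1) x ≤
      ∑' Λ₀ : {Λ : Finset V // x ∈ Λ}, weight w α Λ₀ *
        ∑' T : {T // T.card ≤ N ∧ IsAnchoredAt Λ₀.1 T}, collectionWeight w α T.1 := by
  have hpick : ∀ T : {T // T.card ≤ N + 1 ∧ IsClusterAt x T}, ∃ Λ, Λ ∈ T.1 ∧ x ∈ Λ :=
    fun T => mem_biUnion.1 T.2.2.2.2
  choose pick hpickT hpickx using hpick
  let Anchored := Σ Λ₀ : {Λ : Finset V // x ∈ Λ}, {T // T.card ≤ N ∧ IsAnchoredAt Λ₀.1 T}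
  let ι (T : {T // T.card ≤ N + 1 ∧ IsClusterAt x T}) : Anchored :=
    ⟨⟨pick T, hpickx T⟩, T.1.erase (pick T),
      by rw [card_erase_of_mem (hpickT T)]; exact Nat.sub_le_of_le_add T.2.1,
      isAnchoredAt_erase T.2.2.1 T.2.2.2.1 (hpickT T)⟩
  have hι : Function.Injective ι := fun T T' h => by
    have hpick : pick T = pick T' := congrArg (fun p => p.1.1) h
    have herase : T.1.erase (pick T) = T'.1.erase (pick T') := congrArg (fun p => p.2.1) h
    exact Subtype.ext <| by
      rw [← insert_erase (hpickT T), ← insert_erase (hpickT T'), herase, hpick]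
  let F (p : Anchored) : ℝ≥0∞ := weight w α p.1.1 * collectionWeight w α p.2.1
  calc truncatedClusterSum w α (N + 1) x
      = ∑' T, F (ι T) :=
        tsum_congr fun T => (mul_prod_erase T.1 (weight w α) (hpickT T)).symm
    _ ≤ ∑' p, F p := ENNReal.tsum_comp_le_tsum_of_injective hι F
    _ = _ := by
        rw [ENNReal.tsum_sigma' F]
        exact tsum_congr fun Λ₀ => by simp only [F, ENNReal.tsum_mul_left]

theorem tsum_anchoredAt_le (hα : 0 ≤ α) {N : ℕ} {Λ₀ : Finset V} (hΛ₀ : Λ₀.Nonempty)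
    (hN : ∀ y ∈ Λ₀, truncatedClusterSum w α N y ≤ ENNReal.ofReal α) :
    ∑' T : {T // T.card ≤ N ∧ IsAnchoredAt Λ₀ T}, collectionWeight w α T.1 ≤
      ENNReal.ofReal (Real.exp (α * Λ₀.card)) := by
  obtain ⟨anchor, hanchor⟩ : ∃ anchor : Finset (Finset V) → Λ₀,
      ∀ C, (C.biUnion id ∩ Λ₀).Nonempty → (anchor C : V) ∈ C.biUnion id :=
    ⟨fun C => if h : (C.biUnion id ∩ Λ₀).Nonempty then ⟨h.choose, (mem_inter.1 h.choose_spec).2⟩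
        else ⟨hΛ₀.choose, hΛ₀.choose_spec⟩,
      fun C h => by simpa only [dif_pos h] using (mem_inter.1 h.choose_spec).1⟩
  let good (y : Λ₀) : Set (Finset (Finset V)) := {C | C.card ≤ N ∧ IsClusterAt y.1 C}
  let Ψ (T : {T // T.card ≤ N ∧ IsAnchoredAt Λ₀ T}) (y : Λ₀) : Finset (Finset (Finset V)) :=
    (components T.1).filter (anchor · = y)
  have hΨ_good : ∀ T y, ∀ C ∈ Ψ T y, C ∈ good y := by
    intro T y C hC
    simp only [Ψ, mem_filter] at hC
    obtain ⟨hC, rfl⟩ := hC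
    have hCT := subset_of_mem_components hC
    exact ⟨(card_le_card hCT).trans T.2.1, fun Λ hΛ => T.2.2.1 Λ (hCT hΛ),
      connected_of_mem_components hC, hanchor C (T.2.2.2 C hC)⟩
  have hΨ_inj : Function.Injective Ψ := by
    have hrec : ∀ T, (univ.biUnion (Ψ T)).biUnion id = T.1 := fun T => by
      rw [biUnion_filter_eq_of_maps_to fun _ _ => mem_univ _, biUnion_components]
    exact fun T T' h => Subtype.ext <| by rw [← hrec T, ← hrec T', h]
  let F (y : Λ₀) (M : Finset (Finset (Finset V))) : ℝ≥0∞ :=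
    ∏ C ∈ M, (good y).indicator (collectionWeight w α) C
  calc ∑' T : {T // T.card ≤ N ∧ IsAnchoredAt Λ₀ T}, collectionWeight w α T.1
      = ∑' T, ∏ y, F y (Ψ T y) := tsum_congr fun T => by
        rw [collectionWeight, ← prod_components, ← prod_fiberwise (components T.1) anchor]
        exact prod_congr rfl fun y _ => prod_congr rfl fun C hC =>
          (Set.indicator_of_mem (hΨ_good T y C hC) (collectionWeight w α)).symm
    _ ≤ ∑' f : Λ₀ → Finset (Finset (Finset V)), ∏ y, F y (f y) :=
        ENNReal.tsum_comp_le_tsum_of_injective hΨ_inj _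
    _ ≤ ∏ y, ∑' M, F y M := ENNReal.tsum_pi_prod_le F
    _ ≤ ∏ _y : Λ₀, ENNReal.ofReal (Real.exp α) := prod_le_prod' fun y _ =>
        ENNReal.tsum_finset_prod_le_exp _ hα <| by
          rw [← _root_.tsum_subtype]
          exact hN y y.2
    _ = ENNReal.ofReal (Real.exp (α * Λ₀.card)) := by
        rw [prod_const, card_univ, Fintype.card_coe, ← ENNReal.ofReal_pow (Real.exp_nonneg α),
          ← Real.exp_nat_mul, mul_comm]

theorem truncatedClusterSum_le (hα : 0 ≤ α)
    (hbound : ∀ x : V,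
      ∑' Λ : {Λ : Finset V // x ∈ Λ},
        ENNReal.ofReal (Real.exp (2 * α * (Λ.1.card : ℝ)) * (Real.exp (w Λ) - 1)) ≤
          ENNReal.ofReal α)
    (N : ℕ) (x : V) : truncatedClusterSum w α N x ≤ ENNReal.ofReal α := by
  induction N generalizing x with
  | zero =>
      have : IsEmpty {T // T.card ≤ 0 ∧ IsClusterAt x T} := ⟨fun ⟨T, hcard, hT⟩ => by
        simp [card_eq_zero.1 (Nat.le_zero.1 hcard), IsClusterAt] at hT⟩
      simp [truncatedClusterSum]
  | succ N ih =>
      refine (truncatedClusterSum_succ_le w α N x).trans <|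
        (ENNReal.tsum_le_tsum fun Λ₀ => ?_).trans (hbound x)
      rw [← weight_mul_ofReal_exp]
      exact mul_le_mul_right (tsum_anchoredAt_le w α hα ⟨x, Λ₀.2⟩ fun y _ => ih y) _

end Clusters

end Polymer

theorem connected_collections_sum_le_general
    (d : ℕ) (w : Finset (Site d) → ℝ)
    (hw : ∀ Λ : Finset (Site d), Λ.Nonempty → 0 ≤ w Λ)
    (α : ℝ) (hα : 0 < α)
    (hbound : ∀ x : Site d,
      ∑' Λ : {Λ : Finset (Site d) // x ∈ Λ},
        ENNReal.ofReal
          (Real.exp (2 * α * ((Λ : Finset (Site d)).card : ℝ)) *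
            (Real.exp (w Λ) - 1)) ≤ ENNReal.ofReal α) :
    ∀ x : Site d,
      ∑' (n : ℕ),
        ∑' T : {T : Finset (Finset (Site d)) //
            T.card = n + 1 ∧ (∀ Λ ∈ T, Finset.Nonempty Λ) ∧ ConnColl T ∧ x ∈ T.biUnion id},
          ENNReal.ofReal
            (Real.exp (α * ∑ Λ ∈ (T : Finset (Finset (Site d))), (Λ.card : ℝ)) *
              ∏ Λ ∈ (T : Finset (Finset (Site d))), (Real.exp (w Λ) - 1))
        ≤ ENNReal.ofReal α := by
  intro x
  calc _ = ∑' n : ℕ, ∑' T : {T // T.card = n + 1 ∧ Polymer.IsClusterAt x T},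
          Polymer.collectionWeight w α T.1 :=
        tsum_congr fun n => tsum_congr fun T =>
          (Polymer.collectionWeight_eq_ofReal w α fun Λ hΛ => hw Λ (T.2.2.1 Λ hΛ)).symm
    _ ≤ ∑' T : {T // Polymer.IsClusterAt x T}, Polymer.collectionWeight w α T.1 :=
        ENNReal.tsum_tsum_size_eq_succ_le _ _ Finset.card
    _ ≤ ENNReal.ofReal α :=
        ENNReal.tsum_subtype_le_of_forall_truncation_le _ _ Finset.card fun N =>
          Polymer.truncatedClusterSum_le w α hα.le hbound N x

/-- If `Σ_{Λ ∋ x} e^{2α|Λ|}(e^{w(Λ)} - 1) ≤ α` for every site `x`, then for every site `x`,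
`Σ_{n ≥ 1} Σ e^{α(|Λ₁|+⋯+|Λ_n|)} ∏ᵢ (e^{w(Λᵢ)} - 1) ≤ α`, the inner sum being over
connected collections of `n` distinct finite nonempty subsets whose union contains `x`. -/
theorem connected_collections_sum_le
    (d : ℕ) (hd : 1 ≤ d) (w : Finset (Site d) → ℝ)
    (hw : ∀ Λ : Finset (Site d), Λ.Nonempty → 0 ≤ w Λ)
    (α : ℝ) (hα : 0 < α)
    (hbound : ∀ x : Site d,
      ∑' Λ : {Λ : Finset (Site d) // x ∈ Λ},
        ENNReal.ofReal
          (Real.exp (2 * α * ((Λ : Finset (Site d)).card : ℝ)) *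
            (Real.exp (w Λ) - 1)) ≤ ENNReal.ofReal α) :
    ∀ x : Site d,
      ∑' (n : ℕ),
        ∑' T : {T : Finset (Finset (Site d)) //
            T.card = n + 1 ∧ (∀ Λ ∈ T, Finset.Nonempty Λ) ∧ ConnColl T ∧ x ∈ T.biUnion id},
          ENNReal.ofReal
            (Real.exp (α * ∑ Λ ∈ (T : Finset (Finset (Site d))), (Λ.card : ℝ)) *
              ∏ Λ ∈ (T : Finset (Finset (Site d))), (Real.exp (w Λ) - 1))
        ≤ ENNReal.ofReal α :=
  connected_collections_sum_le_general d w hw α hα hbound
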